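/- arXiv:2411.03662 — 7 statements merged into one kernel-verified Lean document; each statement's English description precedes it below -/
import Mathlib

section
/- The family {Λ_a} is linearly independent over ℤ modulo 2: if c : ℕ → ℤ is a finitely supported function supported on positive integers and ∑_a c_a · Λ_a = 2z for some z ∈ ℤ[ℂ*], then every coefficient c_a is even. -/
/-!
The coefficient of `∑ c_a Λ_a` at a primitive `n`-th root of unity is `∑_{n ∣ a} c_a`, so all
these sums are even. If some `c_a` were odd, take the largest such `a`: every other term of
`∑_{a ∣ b} c_b` has `b > a` and is even, so `c_a` is even after all.
-/

open scoped Classical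

/-- `Λ a ∈ ℤ[ℂˣ]`: the sum of the group-ring basis elements over all `a`-th roots of
unity in `ℂ`, i.e. the divisor of the polynomial `t ^ a - 1`. -/
noncomputable def Lambda (a : ℕ) : MonoidAlgebra ℤ ℂˣ :=
  if h : a = 0 then 0
  else
    haveI : NeZero a := ⟨h⟩
    haveI : Fintype (rootsOfUnity a ℂ) := Fintype.ofFinite _
    ∑ ζ : rootsOfUnity a ℂ, MonoidAlgebra.single (ζ : ℂˣ) (1 : ℤ)

theorem Finsupp.mem_of_forall_sum_filter_dvd_mem {G : Type*} [AddCommGroup G] {H : AddSubgroup G}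
    {f : ℕ →₀ G} (hpos : ∀ a ∈ f.support, a ≠ 0)
    (hsum : ∀ a ∈ f.support, ∑ b ∈ f.support with a ∣ b, f b ∈ H) (a : ℕ) :
    f a ∈ H := by
  by_contra ha
  have hne : {b ∈ f.support | f b ∉ H}.Nonempty :=
    ⟨a, Finset.mem_filter.mpr
      ⟨Finsupp.mem_support_iff.mpr fun h0 ↦ ha (h0 ▸ H.zero_mem), ha⟩⟩
  obtain ⟨m, hm_bad, hm_max⟩ := Finset.exists_max_image _ id hne
  obtain ⟨hm, hfm⟩ := Finset.mem_filter.mp hm_bad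
  have hrest : ∑ b ∈ ({b ∈ f.support | m ∣ b}).erase m, f b ∈ H := by
    refine H.sum_mem fun b hb ↦ ?_
    obtain ⟨hbm, hb⟩ := Finset.mem_erase.mp hb
    obtain ⟨hb, hmb⟩ := Finset.mem_filter.mp hb
    by_contra hfb
    have hmb : m < b := (Nat.le_of_dvd (Nat.pos_of_ne_zero (hpos b hb)) hmb).lt_of_ne' hbm
    exact hmb.not_ge (hm_max b (Finset.mem_filter.mpr ⟨hb, hfb⟩))
  have htotal := hsum m hm
  rw [← Finset.add_sum_erase _ _ (Finset.mem_filter.mpr ⟨hm, dvd_rfl⟩)] at htotal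
  exact hfm (by simpa using H.sub_mem htotal hrest)

theorem lambda_coeff {a : ℕ} (ha : a ≠ 0) (g : ℂˣ) :
    (Lambda a).coeff g = if g ^ a = 1 then 1 else 0 := by
  have : NeZero a := ⟨ha⟩
  let := Fintype.ofFinite (rootsOfUnity a ℂ)
  rw [Lambda, dif_neg ha]
  simp only [MonoidAlgebra.coeff_sum, MonoidAlgebra.coeff_single, Finsupp.finsetSum_apply,
    Finsupp.single_apply]
  split_ifs with hg
  · rw [Fintype.sum_eq_single ⟨g, (mem_rootsOfUnity a g).mpr hg⟩
      fun ζ hζ ↦ if_neg fun h ↦ hζ (Subtype.ext h)]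
    exact if_pos rfl
  · refine Finset.sum_eq_zero fun ζ _ ↦ if_neg ?_
    rintro rfl
    exact hg ζ.2

theorem lambda_coeff_of_isPrimitiveRoot {ζ : ℂˣ} {n a : ℕ} (hζ : IsPrimitiveRoot ζ n)
    (ha : a ≠ 0) : (Lambda a).coeff ζ = if n ∣ a then 1 else 0 := by
  simp only [lambda_coeff ha, hζ.pow_eq_one_iff_dvd]

theorem coeff_sum_smul_lambda_of_isPrimitiveRoot {c : ℕ →₀ ℤ}
    (hc : ∀ a ∈ c.support, a ≠ 0) {ζ : ℂˣ} {n : ℕ} (hζ : IsPrimitiveRoot ζ n) :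
    (∑ a ∈ c.support, c a • Lambda a).coeff ζ = ∑ a ∈ c.support with n ∣ a, c a := by
  rw [Finset.sum_filter, MonoidAlgebra.coeff_sum, Finsupp.finsetSum_apply]
  refine Finset.sum_congr rfl fun a ha ↦ ?_
  rw [MonoidAlgebra.coeff_smul_apply, lambda_coeff_of_isPrimitiveRoot hζ (hc a ha), smul_ite,
    smul_eq_mul, mul_one, smul_zero]

/-- The family `{Λ_a}` over positive integers `a` is linearly independent over `ℤ`
modulo `2`: if a `ℤ`-linear combination of the `Λ_a` is divisible by `2` in `ℤ[ℂˣ]`,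
then every coefficient is even. -/
theorem lambda_linearIndependent_mod_two (c : ℕ →₀ ℤ) (hc : ∀ a ∈ c.support, 1 ≤ a)
    (z : MonoidAlgebra ℤ ℂˣ) (h : ∑ a ∈ c.support, c a • Lambda a = 2 * z) :
    ∀ a, Even (c a) := by
  have hpos : ∀ a ∈ c.support, a ≠ 0 := fun a ha ↦ Nat.one_le_iff_ne_zero.mp (hc a ha)
  intro a
  refine AddSubgroup.mem_even.mp (Finsupp.mem_of_forall_sum_filter_dvd_mem hpos (fun n hn ↦ ?_) a)
  have hζ := (Complex.isPrimitiveRoot_exp n (hpos n hn)).isUnit_unit (hpos n hn)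
  rw [AddSubgroup.mem_even, ← coeff_sum_smul_lambda_of_isPrimitiveRoot hpos hζ, h, two_mul,
    MonoidAlgebra.coeff_add, Finsupp.add_apply]
  exact ⟨_, rfl⟩
end

section
/- For all positive integers a and b, the identity Λ_a · Λ_b = gcd(a, b) · Λ_{lcm(a, b)} holds in the group ring ℤ[ℂ*]. -/
/-! `Λ_a Λ_b` is the pushforward of `∑ ⟨(ζ, η)⟩` along the multiplication homomorphism
`μ_a × μ_b → ℂˣ`, whose image is `μ_lcm(a,b)` because its order is divisible by both `a` and `b`.
Every fibre is a coset of the kernel, of order `ab / lcm(a,b) = gcd(a,b)`. -/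

open scoped Classical

theorem MonoidHom.sum_comp_eq_card_ker_smul {A G M : Type*} [Group A] [Fintype A] [Group G]
    [AddCommMonoid M] (f : A →* G) {H : Subgroup G} [Fintype H] (hf : f.range = H) (F : G → M) :
    ∑ x, F (f x) = Nat.card f.ker • ∑ y : H, F y := by
  subst hf
  have hfiber (y : f.range) : Fintype.card {x // f.rangeRestrict x = y} = Nat.card f.ker := by
    rw [Fintype.card_subtype, MonoidHom.card_fiber_eq_of_mem_range _ (f.rangeRestrict_surjective y)
      (f.rangeRestrict_surjective 1), ← Fintype.card_subtype, ← Nat.card_eq_fintype_card,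
      ← f.ker_rangeRestrict]
    rfl
  rw [← Fintype.sum_fiberwise f.rangeRestrict, Finset.smul_sum]
  refine Fintype.sum_congr _ _ fun y => ?_
  calc ∑ x : {x // f.rangeRestrict x = y}, F (f x) = ∑ _x : {x // f.rangeRestrict x = y}, F y :=
        Fintype.sum_congr _ _ fun x => congrArg (F ∘ Subtype.val) x.2
    _ = Nat.card f.ker • F y := by rw [Finset.sum_const, Finset.card_univ, hfiber]

theorem MonoidAlgebra.sum_single_mul_sum_single {R G : Type*} [CommSemiring R] [CommGroup G]
    (H K : Subgroup G) [Fintype H] [Fintype K] :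
    (∑ h : H, single (h : G) (1 : R)) * ∑ k : K, single (k : G) 1 =
      ∑ p : H × K, single (H.subtype.coprod K.subtype p) 1 := by
  simp only [Finset.sum_mul_sum, single_mul_single, one_mul, Fintype.sum_prod_type,
    MonoidHom.coprod_apply, Subgroup.coe_subtype]

theorem Lambda_eq_sum (a : ℕ) [NeZero a] [Fintype (rootsOfUnity a ℂ)] :
    Lambda a = ∑ ζ : rootsOfUnity a ℂ, MonoidAlgebra.single (ζ : ℂˣ) 1 := by
  rw [Lambda, dif_neg (NeZero.ne a)]
  congr
  exact Subsingleton.elim _ _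

instance Nat.neZero_lcm (a b : ℕ) [NeZero a] [NeZero b] : NeZero (Nat.lcm a b) :=
  ⟨Nat.lcm_ne_zero (NeZero.ne a) (NeZero.ne b)⟩

theorem range_coprod_rootsOfUnity (a b : ℕ) [NeZero a] [NeZero b] :
    ((rootsOfUnity a ℂ).subtype.coprod (rootsOfUnity b ℂ).subtype).range =
      rootsOfUnity (Nat.lcm a b) ℂ := by
  set φ := (rootsOfUnity a ℂ).subtype.coprod (rootsOfUnity b ℂ).subtype
  have hle : φ.range ≤ rootsOfUnity (Nat.lcm a b) ℂ := by
    rintro _ ⟨p, rfl⟩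
    exact mul_mem (rootsOfUnity_le_of_dvd (Nat.dvd_lcm_left a b) p.1.2)
      (rootsOfUnity_le_of_dvd (Nat.dvd_lcm_right a b) p.2.2)
  have hdvd {n : ℕ} [NeZero n] (hn : rootsOfUnity n ℂ ≤ φ.range) : n ∣ Nat.card φ.range :=
    Complex.card_rootsOfUnity n ▸ Subgroup.card_dvd_of_le hn
  have ha : a ∣ Nat.card φ.range := hdvd fun x hx => ⟨(⟨x, hx⟩, 1), by simp [φ]⟩
  have hb : b ∣ Nat.card φ.range := hdvd fun x hx => ⟨(1, ⟨x, hx⟩), by simp [φ]⟩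
  have : Finite φ.range := Finite.of_injective _ (Subgroup.inclusion_injective hle)
  refine Subgroup.eq_of_le_of_card_ge hle ?_
  rw [Complex.card_rootsOfUnity]
  exact Nat.le_of_dvd Nat.card_pos (Nat.lcm_dvd ha hb)

theorem card_ker_coprod_rootsOfUnity (a b : ℕ) [NeZero a] [NeZero b] :
    Nat.card ((rootsOfUnity a ℂ).subtype.coprod (rootsOfUnity b ℂ).subtype).ker = Nat.gcd a b := by
  have h := ((rootsOfUnity a ℂ).subtype.coprod (rootsOfUnity b ℂ).subtype).ker.card_mul_index
  rw [Subgroup.index_ker, range_coprod_rootsOfUnity, Nat.card_prod, Complex.card_rootsOfUnity,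
    Complex.card_rootsOfUnity, Complex.card_rootsOfUnity, ← Nat.gcd_mul_lcm a b] at h
  exact Nat.eq_of_mul_eq_mul_right (Nat.lcm_pos (NeZero.pos a) (NeZero.pos b)) h

/-- For positive integers `a` and `b`, `Λ_a · Λ_b = gcd(a,b) · Λ_{lcm(a,b)}` in `ℤ[ℂˣ]`. -/
theorem lambda_mul_lambda (a b : ℕ) (ha : 1 ≤ a) (hb : 1 ≤ b) :
    Lambda a * Lambda b = (Nat.gcd a b : ℤ) • Lambda (Nat.lcm a b) := by
  have : NeZero a := NeZero.of_pos ha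
  have : NeZero b := NeZero.of_pos hb
  let := Fintype.ofFinite (rootsOfUnity a ℂ)
  let := Fintype.ofFinite (rootsOfUnity b ℂ)
  let := Fintype.ofFinite (rootsOfUnity (Nat.lcm a b) ℂ)
  rw [Lambda_eq_sum a, Lambda_eq_sum b, Lambda_eq_sum (Nat.lcm a b),
    MonoidAlgebra.sum_single_mul_sum_single,
    MonoidHom.sum_comp_eq_card_ker_smul _ (range_coprod_rootsOfUnity a b)
      fun g => MonoidAlgebra.single g (1 : ℤ),
    card_ker_coprod_rootsOfUnity, Nat.cast_smul_eq_nsmul]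
end

section
/- Let E be a nonempty finite multiset of integers, each ≥ 2. The essential exponent set Ē of E is empty if and only if every element of E is even and occurs an even number of times in E; moreover, in that case ∏_{a ∈ E} (Λ_a − 1) ≡ 1 (mod 2) in ℤ[ℂ*] (the product taken with multiplicity). -/
open scoped Classical

/-- `x ≡ y (mod 2)` in the group ring `ℤ[ℂˣ]`: `x - y = 2 z` for some `z ∈ ℤ[ℂˣ]`. -/
def Mod2 (x y : MonoidAlgebra ℤ ℂˣ) : Prop :=
  ∃ z : MonoidAlgebra ℤ ℂˣ, x - y = 2 * z

/-- The essential exponent set of a finite multiset `E` of integers `≥ 2`: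
`Ē = { a ∈ E : (a is odd, or a occurs an odd number of times in E) and
no odd b ∈ E with b ≠ a divides a }`. -/
noncomputable def essentialExponents (E : Multiset ℕ) : Finset ℕ :=
  E.toFinset.filter fun a =>
    (Odd a ∨ Odd (E.count a)) ∧ ∀ b ∈ E, b ≠ a → Odd b → ¬ b ∣ a

/-! The smallest odd element of `E`, if any, is essential, and once `E` has
no odd element every element of odd multiplicity is essential. For the congruence,
`Λ_a` is the sum over a group of `a` elements, so `Λ_a ^ 2 = a Λ_a`; for even `a` this gives
`(Λ_a - 1) ^ 2 ≡ 1 (mod 2)`, and every factor of the product occurs an even number of times. -/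

theorem essentialExponents_nonempty_of_odd_mem {E : Multiset ℕ} {b : ℕ} (hb : b ∈ E)
    (hodd : Odd b) : (essentialExponents E).Nonempty := by
  have hex : ∃ m, m ∈ E ∧ Odd m := ⟨b, hb, hodd⟩
  obtain ⟨hmE, hmodd⟩ := Nat.find_spec hex
  refine ⟨Nat.find hex, Finset.mem_filter.mpr ⟨Multiset.mem_toFinset.mpr hmE, .inl hmodd, ?_⟩⟩
  intro c hcE hcm hcodd hdvd
  have hle : c ≤ Nat.find hex := Nat.le_of_dvd hmodd.pos hdvd
  exact hcm (hle.antisymm (Nat.find_min' hex ⟨hcE, hcodd⟩))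

theorem mem_essentialExponents_of_odd_count {E : Multiset ℕ} {a : ℕ} (heven : ∀ b ∈ E, Even b)
    (ha : Odd (E.count a)) : a ∈ essentialExponents E := by
  have haE : a ∈ E := Multiset.count_pos.mp ha.pos
  refine Finset.mem_filter.mpr ⟨Multiset.mem_toFinset.mpr haE, .inr ha, ?_⟩
  intro c hcE _ hcodd _
  exact Nat.not_odd_iff_even.mpr (heven c hcE) hcodd

theorem essentialExponents_eq_empty_iff (E : Multiset ℕ) :
    essentialExponents E = ∅ ↔ ∀ a ∈ E, Even a ∧ Even (E.count a) := by
  constructor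
  · intro h
    have heven : ∀ b ∈ E, Even b := fun b hb => by
      by_contra hb'
      exact (essentialExponents_nonempty_of_odd_mem hb (Nat.not_even_iff_odd.mp hb')).ne_empty h
    refine fun a ha => ⟨heven a ha, ?_⟩
    by_contra hc
    simpa [h] using mem_essentialExponents_of_odd_count heven (Nat.not_even_iff_odd.mp hc)
  · intro h
    simp only [essentialExponents, Finset.filter_eq_empty_iff, Multiset.mem_toFinset]
    rintro a ha ⟨hodd, -⟩
    exact hodd.elim (Nat.not_odd_iff_even.mpr (h a ha).1) (Nat.not_odd_iff_even.mpr (h a ha).2)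

theorem MonoidAlgebra.sum_single_mul_self {k G H : Type*} [Semiring k] [Monoid G] [Group H]
    [Fintype H] (f : H →* G) :
    (∑ h, single (f h) (1 : k)) * ∑ h, single (f h) (1 : k) =
      Fintype.card H • ∑ h, single (f h) (1 : k) := by
  have hleft (h : H) : ∑ h', single (f h) (1 : k) * single (f h') 1 = ∑ h', single (f h') 1 := by
    simp_rw [single_mul_single, one_mul, ← map_mul]
    exact Equiv.sum_comp (Equiv.mulLeft h) fun h' => single (f h') (1 : k)
  rw [Finset.sum_mul_sum, Finset.sum_congr rfl fun h _ => hleft h, Finset.sum_const,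
    Finset.card_univ]

theorem Lambda_mul_self (a : ℕ) : Lambda a * Lambda a = a • Lambda a := by
  rcases eq_or_ne a 0 with rfl | ha
  · simp [Lambda]
  have : NeZero a := ⟨ha⟩
  let _ : Fintype (rootsOfUnity a ℂ) := Fintype.ofFinite _
  have h := MonoidAlgebra.sum_single_mul_self (k := ℤ) (rootsOfUnity a ℂ).subtype
  rw [Fintype.card_eq_nat_card, Complex.card_rootsOfUnity] at h
  simpa only [Lambda, dif_neg ha, Subgroup.coe_subtype] using h

theorem mod2_iff_smodEq (x y : MonoidAlgebra ℤ ℂˣ) : Mod2 x y ↔ x ≡ y [SMOD Ideal.span {2}] := by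
  rw [SModEq.sub_mem, Ideal.mem_span_singleton]
  rfl

theorem Lambda_sub_one_sq_smodEq_one {a : ℕ} (ha : Even a) :
    (Lambda a - 1) ^ 2 ≡ 1 [SMOD Ideal.span {2}] := by
  obtain ⟨k, rfl⟩ := ha
  rw [← mod2_iff_smodEq]
  refine ⟨k • Lambda (k + k) - Lambda (k + k), ?_⟩
  calc (Lambda (k + k) - 1) ^ 2 - 1 = Lambda (k + k) * Lambda (k + k) - 2 * Lambda (k + k) := by
        ring
    _ = 2 * (k • Lambda (k + k) - Lambda (k + k)) := by
        rw [Lambda_mul_self, nsmul_eq_mul, nsmul_eq_mul]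
        push_cast
        ring

theorem mod2_prod_Lambda_sub_one {E : Multiset ℕ} (hE : ∀ a ∈ E, Even a ∧ Even (E.count a)) :
    Mod2 (E.map fun a => Lambda a - 1).prod 1 := by
  have hfactor : ∀ a ∈ E.toFinset, (Lambda a - 1) ^ E.count a ≡ 1 [SMOD Ideal.span {2}] := by
    intro a ha
    obtain ⟨heven, k, hk⟩ := hE a (Multiset.mem_toFinset.mp ha)
    rw [hk, ← two_mul, pow_mul]
    simpa only [one_pow] using (Lambda_sub_one_sq_smodEq_one heven).pow k
  rw [mod2_iff_smodEq, Finset.prod_multiset_map_count]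
  simpa only [Finset.prod_const_one] using SModEq.prod hfactor

theorem essential_eq_empty_general (E : Multiset ℕ) :
    (essentialExponents E = ∅ ↔ ∀ a ∈ E, Even a ∧ Even (E.count a)) ∧
      (essentialExponents E = ∅ → Mod2 ((E.map fun a => Lambda a - 1).prod) 1) :=
  ⟨essentialExponents_eq_empty_iff E,
    fun h => mod2_prod_Lambda_sub_one ((essentialExponents_eq_empty_iff E).mp h)⟩

/-- For a nonempty finite multiset `E` of integers `≥ 2`: the essential exponent set of `E`
is empty iff every element of `E` is even and occurs an even number of times in `E`, and in
that case `∏_{a ∈ E} (Λ_a - 1) ≡ 1 (mod 2)` in `ℤ[ℂˣ]` (product with multiplicity). -/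
theorem essential_eq_empty (E : Multiset ℕ) (hE : E ≠ 0) (h2 : ∀ a ∈ E, 2 ≤ a) :
    (essentialExponents E = ∅ ↔ ∀ a ∈ E, Even a ∧ Even (E.count a)) ∧
      (essentialExponents E = ∅ → Mod2 ((E.map fun a => Lambda a - 1).prod) 1) :=
  essential_eq_empty_general E
end

section
/- Let E be a finite multiset of integers, each ≥ 2, and let Ē be its essential exponent set. Then ∏_{a ∈ E} (Λ_a − 1) ≡ ∏_{a ∈ Ē} (Λ_a − 1) (mod 2) in ℤ[ℂ*], where the left-hand product is taken with multiplicity and the right-hand product over the set Ē (an empty product being 1). -/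
open scoped Classical

/-!
Reduce modulo `2`. If `b ∣ a` then multiplication by a `b`-th root of unity permutes the `a`-th
roots of unity, so `Λ_b Λ_a = b Λ_a`. Hence, writing `x_a` for the class of `Λ_a - 1`, we have
`x_b x_a = x_b` whenever `b` is odd and `b ∣ a`, and `x_a² = 1` whenever `a` is even. The first
relation collapses powers `x_a ^ n` (`a` odd, `n ≥ 1`) to `x_a`, the second reduces them (`a` even)
to `x_a ^ (n % 2)`; the first also absorbs every `x_a` having an odd proper divisor `b ∈ E` into
the factor `x_c` of a least such divisor `c`, which is essential.
-/

open Finset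

section Absorption

variable {ι M : Type*} [CommMonoid M] {f : ι → M}

theorem prod_mul_eq_of_mul_eq {s : Finset ι} {a b : ι} (hb : b ∈ s) (h : f b * f a = f b) :
    (∏ i ∈ s, f i) * f a = ∏ i ∈ s, f i := by
  rw [← mul_prod_erase s f hb, mul_right_comm, h]

theorem prod_mul_prod_eq_of_forall_exists_mul_eq {s t : Finset ι}
    (h : ∀ a ∈ t, ∃ b ∈ s, f b * f a = f b) :
    (∏ i ∈ s, f i) * ∏ i ∈ t, f i = ∏ i ∈ s, f i := by
  classical
  induction t using Finset.induction with
  | empty => rw [prod_empty, mul_one]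
  | insert a t ha ih =>
    obtain ⟨b, hb, hba⟩ := h a (mem_insert_self a t)
    rw [prod_insert ha, ← mul_assoc, prod_mul_eq_of_mul_eq hb hba,
      ih fun c hc => h c (mem_insert_of_mem hc)]

end Absorption

theorem exists_mem_essentialExponents_odd_dvd {E : Multiset ℕ} {a b : ℕ} (hb : b ∈ E)
    (hb_odd : Odd b) (hba : b ∣ a) : ∃ c ∈ essentialExponents E, Odd c ∧ c ∣ a := by
  have hex : ∃ c, c ∈ E ∧ Odd c ∧ c ∣ a := ⟨b, hb, hb_odd, hba⟩
  obtain ⟨hcE, hc_odd, hca⟩ := Nat.find_spec hex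
  refine ⟨Nat.find hex, ?_, hc_odd, hca⟩
  simp only [essentialExponents, mem_filter, Multiset.mem_toFinset]
  refine ⟨hcE, Or.inl hc_odd, fun d hdE hdc hd_odd hd => ?_⟩
  have hle : d ≤ Nat.find hex := Nat.le_of_dvd hc_odd.pos hd
  exact Nat.find_min hex (lt_of_le_of_ne hle hdc) ⟨hdE, hd_odd, hd.trans hca⟩

section CommMonoid

variable {M : Type*} [CommMonoid M] {x : ℕ → M}

theorem pow_count_eq_ite (hodd : ∀ b a, Odd b → b ∣ a → x b * x a = x b)
    (heven : ∀ a, Even a → x a * x a = 1) {E : Multiset ℕ} {a : ℕ} (ha : a ∈ E) :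
    x a ^ E.count a = if Odd a ∨ Odd (E.count a) then x a else 1 := by
  rcases Nat.even_or_odd a with ha_even | ha_odd
  · have hsq : x a ^ 2 = 1 := by rw [sq, heven a ha_even]
    rw [pow_eq_pow_mod _ hsq]
    rcases Nat.even_or_odd (E.count a) with hn | hn
    · simp [Nat.even_iff.mp hn, Nat.not_odd_iff_even.mpr ha_even, Nat.not_odd_iff_even.mpr hn]
    · simp [Nat.odd_iff.mp hn, hn]
  · rw [if_pos (Or.inl ha_odd)]
    exact IsIdempotentElem.pow_eq (hodd a a ha_odd dvd_rfl) (Multiset.count_ne_zero.mpr ha)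

theorem multiset_prod_map_eq_prod_essentialExponents
    (hodd : ∀ b a, Odd b → b ∣ a → x b * x a = x b) (heven : ∀ a, Even a → x a * x a = 1)
    (E : Multiset ℕ) : (E.map x).prod = ∏ a ∈ essentialExponents E, x a := by
  classical
  set F := E.toFinset.filter fun a => Odd a ∨ Odd (E.count a)
  have hF : (E.map x).prod = ∏ a ∈ F, x a := by
    rw [prod_multiset_map_count, prod_filter]
    exact prod_congr rfl fun a ha => pow_count_eq_ite hodd heven (Multiset.mem_toFinset.mp ha)
  have hsub : essentialExponents E ⊆ F := fun a ha => by
    simp only [essentialExponents, F, mem_filter] at ha ⊢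
    exact ⟨ha.1, ha.2.1⟩
  rw [hF, ← prod_sdiff hsub, mul_comm, prod_mul_prod_eq_of_forall_exists_mul_eq]
  intro a ha
  simp only [essentialExponents, F, mem_sdiff, mem_filter, Multiset.mem_toFinset] at ha
  push Not at ha
  obtain ⟨b, hbE, -, hb_odd, hba⟩ := ha.2 ha.1.1 ha.1.2
  obtain ⟨c, hc, hc_odd, hca⟩ := exists_mem_essentialExponents_odd_dvd hbE hb_odd hba
  exact ⟨c, hc, hodd c a hc_odd hca⟩

end CommMonoid

theorem Lambda_mul_of_dvd {b a : ℕ} (hba : b ∣ a) :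
    Lambda b * Lambda a = (b : MonoidAlgebra ℤ ℂˣ) * Lambda a := by
  rcases eq_or_ne a 0 with rfl | ha
  · simp [Lambda]
  have hb : b ≠ 0 := ne_zero_of_dvd_ne_zero ha hba
  have : NeZero b := ⟨hb⟩
  have : NeZero a := ⟨ha⟩
  let : Fintype (rootsOfUnity b ℂ) := Fintype.ofFinite _
  let : Fintype (rootsOfUnity a ℂ) := Fintype.ofFinite _
  rw [Lambda, Lambda, dif_neg hb, dif_neg ha, sum_mul]
  have hξ : ∀ ξ : rootsOfUnity b ℂ,
      MonoidAlgebra.single (ξ : ℂˣ) (1 : ℤ) *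
          ∑ ζ : rootsOfUnity a ℂ, MonoidAlgebra.single (ζ : ℂˣ) (1 : ℤ) =
        ∑ ζ : rootsOfUnity a ℂ, MonoidAlgebra.single (ζ : ℂˣ) (1 : ℤ) := fun ξ => by
    rw [mul_sum, ← Equiv.sum_comp (Equiv.mulLeft ⟨ξ, rootsOfUnity_le_of_dvd hba ξ.2⟩)
      fun ζ : rootsOfUnity a ℂ => MonoidAlgebra.single (ζ : ℂˣ) (1 : ℤ)]
    refine sum_congr rfl fun ζ _ => ?_
    rw [MonoidAlgebra.single_mul_single, one_mul]
    rfl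
  rw [sum_congr rfl fun ξ _ => hξ ξ, sum_const, card_univ, ← Nat.card_eq_fintype_card,
    Complex.card_rootsOfUnity, nsmul_eq_mul]

local notation "π" => Ideal.Quotient.mk (Ideal.span {(2 : MonoidAlgebra ℤ ℂˣ)})

theorem mod2_iff_mk_eq {x y : MonoidAlgebra ℤ ℂˣ} : Mod2 x y ↔ π x = π y := by
  simp only [Mod2, Ideal.Quotient.eq, Ideal.mem_span_singleton', eq_comm (a := x - y), mul_comm]

theorem mk_Lambda_sub_one_mul_of_odd_dvd {b a : ℕ} (hb : Odd b) (hba : b ∣ a) :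
    π (Lambda b - 1) * π (Lambda a - 1) = π (Lambda b - 1) := by
  obtain ⟨k, rfl⟩ := hb
  rw [← map_mul, ← mod2_iff_mk_eq]
  refine ⟨k * Lambda a - Lambda (2 * k + 1) + 1, ?_⟩
  linear_combination (norm := (push_cast; ring)) Lambda_mul_of_dvd hba

theorem mk_Lambda_sub_one_mul_self_of_even {a : ℕ} (ha : Even a) :
    π (Lambda a - 1) * π (Lambda a - 1) = 1 := by
  obtain ⟨k, rfl⟩ := ha
  rw [← map_mul, ← map_one π, ← mod2_iff_mk_eq]
  refine ⟨k * Lambda (k + k) - Lambda (k + k), ?_⟩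
  linear_combination (norm := (push_cast; ring)) Lambda_mul_of_dvd (dvd_refl (k + k))

theorem prod_mod_two_essential_general (E : Multiset ℕ) :
    Mod2 ((E.map fun a => Lambda a - 1).prod)
      (∏ a ∈ essentialExponents E, (Lambda a - 1)) := by
  rw [mod2_iff_mk_eq, map_multiset_prod, map_prod, Multiset.map_map]
  exact multiset_prod_map_eq_prod_essentialExponents
    (fun _ _ => mk_Lambda_sub_one_mul_of_odd_dvd) (fun _ => mk_Lambda_sub_one_mul_self_of_even) E

/-- For a finite multiset `E` of integers `≥ 2`,
`∏_{a ∈ E} (Λ_a - 1) ≡ ∏_{a ∈ Ē} (Λ_a - 1) (mod 2)` in `ℤ[ℂˣ]`, where the left product is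
taken with multiplicity and the right product is over the essential exponent set `Ē`. -/
theorem prod_mod_two_essential (E : Multiset ℕ) (h2 : ∀ a ∈ E, 2 ≤ a) :
    Mod2 ((E.map fun a => Lambda a - 1).prod)
      (∏ a ∈ essentialExponents E, (Lambda a - 1)) :=
  prod_mod_two_essential_general E
end

section
/- Let Δ ∈ ℤ[t] be a (nonzero, monic) polynomial that is a product of cyclotomic polynomials. Then there exists γ ∈ ℤ[t] with Δ(t) = ± t^{deg γ} · γ(t) · γ(t^{-1}) (i.e. Δ equals ± γ times the reversal of γ) if and only if there exists γ ∈ ℤ[t] with Δ = γ². -/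
/-!
Units of `ℤ[t]` are `±1`, so `Δ = ± γ · rev γ` means that `Δ` is associated to `γ · rev γ`.
Every `Φ_m` is associated to its reversal: by strong induction on `m`, since the reversal of
`∏_{d ∣ m} Φ_d = t^m - 1` is `1 - t^m`.

If `Δ ~ γ · rev γ`, a prime factor `p` of `γ` divides `Δ`, so `p ~ Φ_m` for some `m` in the list
and `p · rev p ~ Φ_m²`; as the `Φ_m` are pairwise non-associated primes, `Φ_m` occurs twice in
the list, and removing both copies reduces to the cofactor of `p` in `γ`.
Conversely, if `Δ = σ²` then `(rev σ)² = rev Δ ~ Δ = σ²`, hence `rev σ ~ σ` because `ℤ[t]` is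
integrally closed, and `Δ ~ σ · rev σ`.
-/

open Polynomial

theorem associated_of_pow_associated_pow {A : Type*} [CommRing A] [IsDomain A]
    [IsIntegrallyClosed A] {n : ℕ} (hn : n ≠ 0) {a b : A} (h : Associated (a ^ n) (b ^ n)) :
    Associated a b :=
  associated_of_dvd_dvd ((IsIntegrallyClosed.pow_dvd_pow_iff hn).1 h.dvd)
    ((IsIntegrallyClosed.pow_dvd_pow_iff hn).1 h.symm.dvd)

namespace Polynomial

theorem int_associated_iff_eq_or_eq_neg {p q : ℤ[X]} :
    Associated p q ↔ p = q ∨ p = -q := by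
  refine ⟨?_, ?_⟩
  · rintro ⟨u, rfl⟩
    obtain ⟨r, hr, hu⟩ := isUnit_iff.mp u.isUnit
    rcases Int.isUnit_iff.mp hr with rfl | rfl <;> simp [← hu]
  · rintro (rfl | rfl)
    exacts [Associated.refl p, Associated.neg_left_iff.2 (Associated.refl q)]

@[simp]
theorem reverse_one {R : Type*} [Semiring R] : (1 : R[X]).reverse = 1 := by
  simpa using reverse_C (1 : R)

section Reverse

variable {R : Type*} [CommRing R] [IsDomain R]

variable (R) in
noncomputable def reverseMonoidHom : R[X] →* R[X] where
  toFun := reverse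
  map_one' := reverse_one
  map_mul' := reverse_mul_of_domain

theorem reverse_prod {ι : Type*} (s : Finset ι) (f : ι → R[X]) :
    (∏ i ∈ s, f i).reverse = ∏ i ∈ s, (f i).reverse :=
  map_prod (reverseMonoidHom R) f s

theorem reverse_pow (p : R[X]) (n : ℕ) : (p ^ n).reverse = p.reverse ^ n :=
  map_pow (reverseMonoidHom R) p n

theorem reverse_X_pow_sub_one (n : ℕ) : ((X : R[X]) ^ n - 1).reverse = -(X ^ n - 1) := by
  rw [sub_eq_add_neg, ← C_1, ← C_neg, reverse_add_C]
  simpa using reverse_X_pow_mul (1 : R[X]) n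

theorem _root_.Associated.reverse {p q : R[X]} (h : Associated p q) :
    Associated p.reverse q.reverse := by
  obtain ⟨u, rfl⟩ := h
  obtain ⟨r, -, hu⟩ := isUnit_iff.mp u.isUnit
  exact ⟨u, by rw [reverse_mul_of_domain, ← hu, reverse_C]⟩

theorem associated_reverse_cyclotomic (n : ℕ) :
    Associated (cyclotomic n R).reverse (cyclotomic n R) := by
  induction n using Nat.strong_induction_on with
  | _ n ih =>
  rcases n.eq_zero_or_pos with rfl | hn
  · simp
  have hprod : Associated (∏ d ∈ n.divisors, (cyclotomic d R).reverse)
      (∏ d ∈ n.divisors, cyclotomic d R) := by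
    rw [← reverse_prod, prod_cyclotomic_eq_X_pow_sub_one hn, reverse_X_pow_sub_one]
    exact Associated.neg_left_iff.2 (.refl _)
  rw [← Nat.cons_self_properDivisors hn.ne', Finset.prod_cons, Finset.prod_cons] at hprod
  exact hprod.of_mul_right
    (Associated.prod _ _ _ fun d hd => ih d (Nat.mem_properDivisors.1 hd).2)
    (Finset.prod_ne_zero_iff.2 fun d _ => reverse_eq_zero.not.2 (cyclotomic.monic d R).ne_zero)

theorem associated_reverse_prod_cyclotomic (l : List ℕ) :
    Associated ((l.map (cyclotomic · R)).prod).reverse (l.map (cyclotomic · R)).prod := by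
  induction l with
  | nil => simp
  | cons m l ih =>
    simpa only [List.map_cons, List.prod_cons, reverse_mul_of_domain] using
      (associated_reverse_cyclotomic m).mul_mul ih

theorem associated_mul_reverse_of_associated_reverse [IsIntegrallyClosed R[X]] {σ : R[X]}
    (h : Associated (σ ^ 2).reverse (σ ^ 2)) : Associated (σ ^ 2) (σ * σ.reverse) := by
  rw [reverse_pow] at h
  rw [sq]
  exact (Associated.refl σ).mul_mul (associated_of_pow_associated_pow two_ne_zero h).symm

end Reverse

theorem monic_list_prod_cyclotomic {R : Type*} [CommRing R] (l : List ℕ) :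
    (l.map (cyclotomic · R)).prod.Monic := by
  have := monic_multiset_prod_of_monic (l : Multiset ℕ) (cyclotomic · R)
    fun m _ => cyclotomic.monic m R
  rwa [Multiset.map_coe, Multiset.prod_coe] at this

theorem exists_mem_associated_cyclotomic_of_prime_dvd {l : List ℕ} (hl : ∀ m ∈ l, 0 < m)
    {p : ℤ[X]} (hp : Prime p) (hdvd : p ∣ (l.map (cyclotomic · ℤ)).prod) :
    ∃ m ∈ l, Associated p (cyclotomic m ℤ) := by
  obtain ⟨_, hq, hpq⟩ := hp.dvd_prod_iff.1 hdvd
  obtain ⟨m, hm, rfl⟩ := List.mem_map.1 hq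
  exact ⟨m, hm, hp.irreducible.associated_of_dvd (cyclotomic.irreducible (hl m hm)) hpq⟩

theorem mem_of_cyclotomic_dvd {l : List ℕ} (hl : ∀ m ∈ l, 0 < m) {m : ℕ} (hm : 0 < m)
    (hdvd : cyclotomic m ℤ ∣ (l.map (cyclotomic · ℤ)).prod) : m ∈ l := by
  obtain ⟨k, hk, hassoc⟩ :=
    exists_mem_associated_cyclotomic_of_prime_dvd hl (cyclotomic.irreducible hm).prime hdvd
  rwa [cyclotomic_injective
    (eq_of_monic_of_associated (cyclotomic.monic _ _) (cyclotomic.monic _ _) hassoc)]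

theorem associated_prod_erase_of_associated_cyclotomic_mul {R : Type*} [CommRing R] [IsDomain R]
    {l : List ℕ} {m : ℕ} (hm : m ∈ l) {q : R[X]}
    (h : Associated (l.map (cyclotomic · R)).prod (cyclotomic m R * q)) :
    Associated ((l.erase m).map (cyclotomic · R)).prod q := by
  rw [← List.prod_map_erase _ hm] at h
  exact h.of_mul_left (.refl _) (cyclotomic_ne_zero m R)

theorem exists_eq_sq_of_associated_mul_reverse (γ : ℤ[X]) {l : List ℕ} (hl : ∀ m ∈ l, 0 < m)
    (h : Associated (l.map (cyclotomic · ℤ)).prod (γ * γ.reverse)) :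
    ∃ σ, (l.map (cyclotomic · ℤ)).prod = σ ^ 2 := by
  induction γ using UniqueFactorizationMonoid.induction_on_prime generalizing l with
  | h₁ => exact ⟨0, by simpa using h⟩
  | h₂ u hu =>
    have hunit : IsUnit (u * u.reverse) := by
      obtain ⟨r, hr, rfl⟩ := isUnit_iff.mp hu
      rw [reverse_C]
      exact (hr.map C).mul (hr.map C)
    exact ⟨1, by simpa using (monic_list_prod_cyclotomic l).isUnit_iff.1 (h.isUnit_iff.2 hunit)⟩
  | h₃ a p _ hp ih =>
    obtain ⟨m, hm, hpm⟩ := exists_mem_associated_cyclotomic_of_prime_dvd hl hp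
      (((dvd_mul_right p a).mul_right _).trans h.symm.dvd)
    have hsq : Associated (p * p.reverse) (cyclotomic m ℤ * cyclotomic m ℤ) :=
      hpm.mul_mul (hpm.reverse.trans (associated_reverse_cyclotomic m))
    have h₀ : Associated (l.map (cyclotomic · ℤ)).prod
        (cyclotomic m ℤ * (cyclotomic m ℤ * (a * a.reverse))) := by
      rw [← mul_assoc]
      refine h.trans ?_
      rw [reverse_mul_of_domain, mul_mul_mul_comm]
      exact hsq.mul_right _
    have h₁ := associated_prod_erase_of_associated_cyclotomic_mul hm h₀
    have hm' : m ∈ l.erase m := mem_of_cyclotomic_dvd (fun k hk => hl k (List.mem_of_mem_erase hk))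
      (hl m hm) ((dvd_mul_right _ _).trans h₁.symm.dvd)
    obtain ⟨σ, hσ⟩ := ih (fun k hk => hl k (List.mem_of_mem_erase (List.mem_of_mem_erase hk)))
      (associated_prod_erase_of_associated_cyclotomic_mul hm' h₁)
    exact ⟨cyclotomic m ℤ * σ, by
      rw [← List.prod_map_erase _ hm, ← List.prod_map_erase _ hm', hσ]; ring⟩

end Polynomial

theorem foxMilnor_iff_square_general (Δ : Polynomial ℤ)
    (hcycl : ∃ l : List ℕ, (∀ m ∈ l, 0 < m) ∧
      Δ = (l.map fun m => Polynomial.cyclotomic m ℤ).prod) :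
    (∃ γ : Polynomial ℤ, Δ = γ * γ.reverse ∨ Δ = -(γ * γ.reverse)) ↔
      ∃ γ : Polynomial ℤ, Δ = γ ^ 2 := by
  obtain ⟨l, hl, rfl⟩ := hcycl
  simp_rw [← int_associated_iff_eq_or_eq_neg]
  refine ⟨fun ⟨γ, h⟩ => exists_eq_sq_of_associated_mul_reverse γ hl h, fun ⟨σ, hσ⟩ => ⟨σ, ?_⟩⟩
  rw [hσ]
  exact associated_mul_reverse_of_associated_reverse (hσ ▸ associated_reverse_prod_cyclotomic l)

/-- Let `Δ ∈ ℤ[t]` be a nonzero monic polynomial that is a product of cyclotomic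
polynomials. Then `Δ = ± γ(t) · (t^{deg γ} γ(t⁻¹))` for some `γ ∈ ℤ[t]` (i.e. `Δ` equals
`± γ` times the reversal of `γ`) if and only if `Δ` is a square in `ℤ[t]`. -/
theorem foxMilnor_iff_square (Δ : Polynomial ℤ) (hΔ : Δ ≠ 0) (hmonic : Δ.Monic)
    (hcycl : ∃ l : List ℕ, (∀ m ∈ l, 0 < m) ∧
      Δ = (l.map fun m => Polynomial.cyclotomic m ℤ).prod) :
    (∃ γ : Polynomial ℤ, Δ = γ * γ.reverse ∨ Δ = -(γ * γ.reverse)) ↔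
      ∃ γ : Polynomial ℤ, Δ = γ ^ 2 :=
  foxMilnor_iff_square_general Δ hcycl
end

section
/- Let a_1, …, a_{n+1} be integers with a_i ≥ 2 for all i. Then ∏_{i=1}^{n+1} (Λ_{a_i} − 1) is not congruent to 0 modulo 2 in ℤ[ℂ*], i.e. there is no z ∈ ℤ[ℂ*] with ∏_{i=1}^{n+1} (Λ_{a_i} − 1) = 2z. (Equivalently, by Brieskorn's formula, the Alexander polynomial of the algebraic knot associated with the Brieskorn polynomial z_1^{a_1} + … + z_{n+1}^{a_{n+1}} is never a square in ℤ[t].) -/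
open scoped Classical

/-! Put `N = ∏ aᵢ = 2 ^ k * M` with `M` odd and let `K` be an algebraic closure of `𝔽₂`.
The character `χ : μ_N(ℂ) → Kˣ`, `ζ ↦ ζ ^ 2 ^ k` followed by an isomorphism `μ_M(ℂ) ≃ μ_M(K)`,
has kernel `μ_{2 ^ k}`. For `a = aᵢ ≥ 2` the sum of `χ` over `μ_a` vanishes: either `χ` is
nontrivial on `μ_a`, or `μ_a ⊆ μ_{2 ^ k}`, so `a` is even and the sum is `a = 0` in `K`.
Hence the ring map `ℤ[μ_N] → K` induced by `χ` sends `∏ (Λ_{aᵢ} - 1)` to `(-1) ^ (n + 1) ≠ 0`,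
whereas it kills `2 * ℤ[μ_N]`, and an element of `ℤ[μ_N]` that is twice an element of `ℤ[ℂˣ]`
is already twice an element of `ℤ[μ_N]`. -/

namespace MonoidAlgebra

theorem comapDomain_mapDomain {R M N : Type*} [Semiring R] {f : M → N}
    (hf : Function.Injective f) (x : MonoidAlgebra R M) :
    comapDomain f hf (mapDomain f x) = x := by
  ext : 1
  simpa using Finsupp.comapDomain_mapDomain f hf x.coeff

theorem eq_two_mul_comapDomain_of_mapDomain_eq_two_mul {R M N : Type*} [Semiring R]
    [Monoid M] [Monoid N] {f : M → N} (hf : Function.Injective f) {x : MonoidAlgebra R M}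
    {z : MonoidAlgebra R N} (h : mapDomain f x = 2 * z) : x = 2 * comapDomain f hf z :=
  calc x = comapDomain f hf (mapDomain f x) := (comapDomain_mapDomain hf x).symm
    _ = 2 * comapDomain f hf z := by rw [h, two_mul, two_mul, comapDomain_add]

end MonoidAlgebra

theorem sum_units_eq_zero_of_ne_one_or_dvd_card {G K : Type*} [Group G] [Fintype G] [Field K]
    (p : ℕ) [CharP K p] (χ : G →* Kˣ) (h : χ ≠ 1 ∨ p ∣ Fintype.card G) :
    ∑ g, (χ g : K) = 0 := by
  by_cases hχ : χ = 1
  · simpa [hχ, CharP.cast_eq_zero_iff K p] using h.resolve_left (not_not.2 hχ)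
  · exact sum_hom_units_eq_zero ((Units.coeHom K).comp χ) fun h1 ↦
      hχ (MonoidHom.ext fun g ↦ Units.ext (DFunLike.congr_fun h1 g))

theorem exists_monoidHom_eq_one_iff_pow_eq_one (F : Type*) {K : Type*} [CommMonoid F] [Field K]
    [IsSepClosed K] (p : ℕ) [hp : Fact p.Prime] [CharP K p] (N : ℕ) [NeZero N]
    [HasEnoughRootsOfUnity F N] :
    ∃ χ : rootsOfUnity N F →* Kˣ, ∀ ζ, χ ζ = 1 ↔ ζ ^ p ^ N.factorization p = 1 := by
  set k := N.factorization p
  set M := ordCompl[p] N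
  have : NeZero (M : K) :=
    ⟨fun h ↦ Nat.not_dvd_ordCompl hp.out (NeZero.ne N) ((CharP.cast_eq_zero_iff K p M).mp h)⟩
  have : NeZero M := .of_neZero_natCast K
  have : HasEnoughRootsOfUnity F M := .of_dvd F (Nat.ordCompl_dvd N p)
  let e : rootsOfUnity M F ≃* rootsOfUnity M K := mulEquivOfCyclicCardEq <| by
    rw [HasEnoughRootsOfUnity.natCard_rootsOfUnity, HasEnoughRootsOfUnity.natCard_rootsOfUnity]
  let π : rootsOfUnity N F →* rootsOfUnity M F :=
    ((powMonoidHom (p ^ k)).comp (rootsOfUnity N F).subtype).codRestrict _ fun ζ ↦ by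
      rw [mem_rootsOfUnity, MonoidHom.comp_apply, powMonoidHom_apply, ← pow_mul,
        Nat.ordProj_mul_ordCompl_eq_self, ← mem_rootsOfUnity]
      exact ζ.2
  refine ⟨(rootsOfUnity M K).subtype.comp (e.toMonoidHom.comp π), fun ζ ↦ ?_⟩
  rw [MonoidHom.comp_apply, map_eq_one_iff _ (rootsOfUnity M K).subtype_injective,
    MonoidHom.comp_apply, MulEquiv.coe_toMonoidHom, MulEquiv.map_eq_one_iff,
    ← Subtype.coe_inj, ← Subtype.coe_inj]
  rfl

-- Definitionally equal to the instance built inside `Lambda`.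
noncomputable instance (a : ℕ) [NeZero a] : Fintype (rootsOfUnity a ℂ) := Fintype.ofFinite _

noncomputable def lambdaIn {a N : ℕ} [NeZero a] (h : a ∣ N) :
    MonoidAlgebra ℤ (rootsOfUnity N ℂ) :=
  ∑ ζ : rootsOfUnity a ℂ, .single (Subgroup.inclusion (rootsOfUnity_le_of_dvd h) ζ) 1

theorem mapDomainRingHom_lambdaIn {a N : ℕ} [NeZero a] (h : a ∣ N) :
    MonoidAlgebra.mapDomainRingHom ℤ (rootsOfUnity N ℂ).subtype (lambdaIn h) = Lambda a := by
  simp only [lambdaIn, Lambda, dif_neg (NeZero.ne a), map_sum,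
    MonoidAlgebra.mapDomainRingHom_apply, MonoidAlgebra.mapDomain_single]
  rfl

theorem lift_lambdaIn_eq_zero {K : Type*} [Field K] (p : ℕ) [hp : Fact p.Prime] [CharP K p]
    {a N k : ℕ} [NeZero a] (χ : rootsOfUnity N ℂ →* Kˣ) (hχ : ∀ ζ, χ ζ = 1 → ζ ^ p ^ k = 1)
    (h : a ∣ N) (ha : a ≠ 1) :
    MonoidAlgebra.lift ℤ K (rootsOfUnity N ℂ) ((Units.coeHom K).comp χ) (lambdaIn h) = 0 := by
  let incl : rootsOfUnity a ℂ →* rootsOfUnity N ℂ := Subgroup.inclusion (rootsOfUnity_le_of_dvd h)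
  simp only [lambdaIn, map_sum, MonoidAlgebra.lift_single, one_smul]
  refine sum_units_eq_zero_of_ne_one_or_dvd_card p (χ.comp incl) (or_iff_not_imp_left.2 ?_)
  intro htriv
  obtain ⟨g, hg⟩ := IsCyclic.exists_ofOrder_eq_natCard (α := rootsOfUnity a ℂ)
  have hga : orderOf g = a := by rw [hg, Complex.card_rootsOfUnity]
  have hgk : g ^ p ^ k = 1 := by
    have := hχ (incl g) (by simpa using DFunLike.congr_fun (not_not.1 htriv) g)
    exact (map_eq_one_iff incl (Subgroup.inclusion_injective _)).1 (by rwa [map_pow])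
  obtain ⟨i, -, rfl⟩ := (Nat.dvd_prime_pow hp.out).1 (hga ▸ orderOf_dvd_of_pow_eq_one hgk)
  rw [Fintype.card_eq_nat_card, Complex.card_rootsOfUnity]
  exact dvd_pow_self p (by rintro rfl; exact ha (pow_zero p))

/-- For integers `a_1, …, a_{n+1} ≥ 2`, the product `∏_{i} (Λ_{a_i} - 1)` (the divisor of
the Alexander polynomial of the Brieskorn polynomial `z_1^{a_1} + ⋯ + z_{n+1}^{a_{n+1}}`)
is not congruent to `0` modulo `2` in `ℤ[ℂˣ]`. -/
theorem brieskorn_divisor_not_square (n : ℕ) (a : Fin (n + 1) → ℕ) (ha : ∀ i, 2 ≤ a i) :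
    ¬ ∃ z : MonoidAlgebra ℤ ℂˣ, ∏ i, (Lambda (a i) - 1) = 2 * z := by
  rintro ⟨z, hz⟩
  have (i : Fin (n + 1)) : NeZero (a i) := ⟨by have := ha i; omega⟩
  set N := ∏ i, a i
  have : NeZero N := ⟨Finset.prod_ne_zero_iff.2 fun i _ ↦ NeZero.ne (a i)⟩
  have hdvd (i : Fin (n + 1)) : a i ∣ N := Finset.dvd_prod_of_mem a (Finset.mem_univ i)
  let K := AlgebraicClosure (ZMod 2)
  obtain ⟨χ, hχ⟩ := exists_monoidHom_eq_one_iff_pow_eq_one ℂ (K := K) 2 N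
  set ψ := MonoidAlgebra.lift ℤ K (rootsOfUnity N ℂ) ((Units.coeHom K).comp χ)
  have hψ (i : Fin (n + 1)) : ψ (lambdaIn (hdvd i)) = 0 :=
    lift_lambdaIn_eq_zero 2 χ (fun ζ ↦ (hχ ζ).1) (hdvd i) (by have := ha i; omega)
  have hmap : MonoidAlgebra.mapDomain (rootsOfUnity N ℂ).subtype
      (∏ i, (lambdaIn (hdvd i) - 1)) = 2 * z := by
    rw [← MonoidAlgebra.mapDomainRingHom_apply, map_prod]
    simpa only [map_sub, map_one, mapDomainRingHom_lambdaIn] using hz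
  have h2 := congrArg ψ
    (MonoidAlgebra.eq_two_mul_comapDomain_of_mapDomain_eq_two_mul Subtype.val_injective hmap)
  simp only [map_prod, map_sub, map_one, hψ, zero_sub, Finset.prod_const, Finset.card_univ,
    map_mul, map_ofNat, CharTwo.two_eq_zero, zero_mul] at h2
  exact pow_ne_zero _ (neg_ne_zero.2 one_ne_zero) h2
end

section
/- Let A and B be finite sets of odd integers, each element ≥ 3, such that within A no element divides a different element of A, and within B no element divides a different element of B. If ∏_{a ∈ A} (Λ_a − 1) ≡ ∏_{b ∈ B} (Λ_b − 1) (mod 2) in ℤ[ℂ*], then A = B. -/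
open scoped Classical

/-!
Test the congruence against ring maps `ℤ[ℂˣ] → 𝔽̄₂` induced by characters `χ : ℂˣ → 𝔽̄₂ˣ`;
they kill `2`. Such a map sends `Λ_a - 1` to `a - 1 = 0` if `χ` is trivial on the `a`-th roots
of unity, and to `-1` otherwise, since a nontrivial character sums to zero over a finite group.
Let `N` be the (odd) product of all exponents. As `𝔽̄₂ˣ` is divisible and contains a cyclic group
of order `N`, some character `ψ` is injective on the `N`-th roots of unity, and then
`χ = ψ ∘ (·)^d` is trivial on the `a`-th roots of unity exactly when `a ∣ d`. So
`∏_{a ∈ A} (Λ_a - 1)` is killed by this map iff some `a ∈ A` divides `d`: the sets `A` and `B`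
generate the same upper set for divisibility, and an antichain is determined by its upper set.
-/

section Antichain

variable {α : Type*} [CommMonoidWithZero α] [IsCancelMulZero α] [Subsingleton αˣ]
  {A B : Finset α}

theorem Finset.subset_of_isAntichain_of_forall_exists_dvd (hA : IsAntichain (· ∣ ·) (A : Set α))
    (hAB : ∀ a ∈ A, ∃ b ∈ B, b ∣ a) (hBA : ∀ b ∈ B, ∃ a ∈ A, a ∣ b) : A ⊆ B := by
  intro a ha
  obtain ⟨b, hb, hba⟩ := hAB a ha
  obtain ⟨a', ha', ha'b⟩ := hBA b hb
  obtain rfl : a' = a := by_contra fun hne => hA ha' ha hne (ha'b.trans hba)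
  rwa [dvd_antisymm ha'b hba]

theorem Finset.eq_of_isAntichain_of_exists_dvd_iff (hA : IsAntichain (· ∣ ·) (A : Set α))
    (hB : IsAntichain (· ∣ ·) (B : Set α)) (h : ∀ c, (∃ a ∈ A, a ∣ c) ↔ ∃ b ∈ B, b ∣ c) :
    A = B := by
  have hAB : ∀ a ∈ A, ∃ b ∈ B, b ∣ a := fun a ha => (h a).1 ⟨a, ha, dvd_rfl⟩
  have hBA : ∀ b ∈ B, ∃ a ∈ A, a ∣ b := fun b hb => (h b).2 ⟨b, hb, dvd_rfl⟩
  exact (subset_of_isAntichain_of_forall_exists_dvd hA hAB hBA).antisymm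
    (subset_of_isAntichain_of_forall_exists_dvd hB hBA hAB)

end Antichain

theorem rootsOfUnity_le_rootsOfUnity_iff {M : Type*} [CommMonoid M] {a d : ℕ} [NeZero a]
    [HasEnoughRootsOfUnity M a] : rootsOfUnity a M ≤ rootsOfUnity d M ↔ a ∣ d := by
  refine ⟨fun h => ?_, rootsOfUnity_le_of_dvd⟩
  obtain ⟨ζ, hζ⟩ := HasEnoughRootsOfUnity.exists_primitiveRoot M a
  have hζd := h hζ.toRootsOfUnity.2
  rw [mem_rootsOfUnity] at hζd
  exact hζ.dvd_of_pow_eq_one d (by simpa using congrArg Units.val hζd)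

theorem rootsOfUnity_le_ker_comp_powMonoidHom_iff {M G : Type*} [CommMonoid M] [Monoid G]
    {ψ : Mˣ →* G} {N a d : ℕ} [NeZero a] [HasEnoughRootsOfUnity M a]
    (hψ : Set.InjOn ψ (rootsOfUnity N M)) (haN : a ∣ N) :
    rootsOfUnity a M ≤ (ψ.comp (powMonoidHom d)).ker ↔ a ∣ d := by
  rw [← rootsOfUnity_le_rootsOfUnity_iff (M := M)]
  refine forall_congr' fun ζ => imp_congr_right fun hζ => ?_
  have hζd : ζ ^ d ∈ rootsOfUnity N M := pow_mem (rootsOfUnity_le_of_dvd haN hζ) d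
  simp only [MonoidHom.mem_ker, MonoidHom.comp_apply, powMonoidHom_apply, mem_rootsOfUnity]
  exact ⟨fun h => hψ hζd (one_mem _) (h.trans (map_one ψ).symm), fun h => by rw [h, map_one]⟩

namespace IsAlgClosed

variable {K : Type*} [Field K] [IsAlgClosed K]

theorem baer_additive_units : Module.Baer ℤ (Additive Kˣ) :=
  letI : DivisibleBy (Additive Kˣ) ℕ := divisibleByOfSMulRightSurj _ _ fun {n} hn y => by
    obtain ⟨z, hz⟩ := exists_pow_nat_eq (y.toMul : K) (Nat.pos_of_ne_zero hn)
    have hz0 : z ≠ 0 := by rintro rfl; exact y.toMul.ne_zero (by simpa [hn] using hz.symm)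
    exact ⟨.ofMul (Units.mk0 z hz0), Additive.toMul.injective (Units.ext (by simpa using hz))⟩
  letI := AddGroup.divisibleByIntOfDivisibleByNat (Additive Kˣ)
  Module.Baer.of_divisible _

theorem exists_monoidHom_comp_subtype_eq {G : Type*} [CommGroup G] {H : Subgroup G}
    (f : H →* Kˣ) : ∃ g : G →* Kˣ, g.comp H.subtype = f := by
  obtain ⟨g, hg⟩ := baer_additive_units.extension_property_addMonoidHom
    (MonoidHom.toAdditive H.subtype) Subtype.val_injective (MonoidHom.toAdditive f)
  exact ⟨MonoidHom.toAdditive.symm g, MonoidHom.toAdditive.injective hg⟩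

theorem exists_monoidHom_injOn_of_isCyclic {G : Type*} [CommGroup G] (H : Subgroup G)
    [IsCyclic H] [Finite H] [NeZero (Nat.card H : K)] : ∃ ψ : G →* K, Set.InjOn ψ H := by
  have : NeZero (Nat.card H) := .of_neZero_natCast K
  let e : H ≃* rootsOfUnity (Nat.card H) K :=
    mulEquivOfCyclicCardEq (HasEnoughRootsOfUnity.natCard_rootsOfUnity K _).symm
  obtain ⟨g, hg⟩ := exists_monoidHom_comp_subtype_eq ((Subgroup.subtype _).comp e.toMonoidHom)
  have hge (x : H) : g x = e x := DFunLike.congr_fun hg x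
  refine ⟨(Units.coeHom K).comp g, fun x hx y hy hxy => ?_⟩
  have : e ⟨x, hx⟩ = e ⟨y, hy⟩ :=
    Subtype.ext ((hge ⟨x, hx⟩).symm.trans ((Units.ext hxy).trans (hge ⟨y, hy⟩)))
  simpa using e.injective this

end IsAlgClosed

theorem Mod2.map_eq {x y : MonoidAlgebra ℤ ℂˣ} (h : Mod2 x y) {R F : Type*} [Ring R] [CharP R 2]
    [FunLike F (MonoidAlgebra ℤ ℂˣ) R] [RingHomClass F (MonoidAlgebra ℤ ℂˣ) R] (φ : F) :
    φ x = φ y := by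
  obtain ⟨z, hz⟩ := h
  rw [← sub_eq_zero, ← map_sub, hz, map_mul, map_ofNat, CharTwo.two_eq_zero, zero_mul]

section Character

variable {K : Type*} [CommRing K] [IsDomain K]

theorem lift_Lambda (χ : ℂˣ →* K) (a : ℕ) [NeZero a] :
    MonoidAlgebra.lift ℤ K ℂˣ χ (Lambda a) = if rootsOfUnity a ℂ ≤ χ.ker then (a : K) else 0 := by
  let : Fintype (rootsOfUnity a ℂ) := Fintype.ofFinite _
  rw [Lambda, dif_neg (NeZero.ne a), map_sum]
  simp only [MonoidAlgebra.lift_single, one_smul]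
  have hker : rootsOfUnity a ℂ ≤ χ.ker ↔ χ.comp (rootsOfUnity a ℂ).subtype = 1 := by
    rw [← MonoidHom.range_le_ker_iff, Subgroup.range_subtype]
  refine (sum_hom_units (χ.comp (rootsOfUnity a ℂ).subtype)).trans ?_
  simp only [← hker, Fintype.card_eq_nat_card, Complex.card_rootsOfUnity]
  split_ifs <;> simp

variable [CharP K 2]

theorem lift_Lambda_sub_one_eq_zero_iff (χ : ℂˣ →* K) {a : ℕ} (ha : Odd a) :
    MonoidAlgebra.lift ℤ K ℂˣ χ (Lambda a - 1) = 0 ↔ rootsOfUnity a ℂ ≤ χ.ker := by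
  have : NeZero a := ⟨ha.pos.ne'⟩
  rw [map_sub, map_one, lift_Lambda, sub_eq_zero]
  split_ifs with h
  · simp [natCast_eq_one_of_odd_of_two_eq_zero ha CharTwo.two_eq_zero, h]
  · simp [h]

theorem lift_prod_Lambda_sub_one_eq_zero_iff (χ : ℂˣ →* K) {A : Finset ℕ}
    (hA : ∀ a ∈ A, Odd a) :
    MonoidAlgebra.lift ℤ K ℂˣ χ (∏ a ∈ A, (Lambda a - 1)) = 0 ↔
      ∃ a ∈ A, rootsOfUnity a ℂ ≤ χ.ker := by
  rw [map_prod, Finset.prod_eq_zero_iff]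
  exact exists_congr fun a => and_congr_right fun ha => lift_Lambda_sub_one_eq_zero_iff χ (hA a ha)

theorem lift_comp_powMonoidHom_prod_Lambda_sub_one_eq_zero_iff {ψ : ℂˣ →* K} {N : ℕ}
    (hψ : Set.InjOn ψ (rootsOfUnity N ℂ)) {A : Finset ℕ} (hA : ∀ a ∈ A, Odd a)
    (hAN : ∀ a ∈ A, a ∣ N) (d : ℕ) :
    MonoidAlgebra.lift ℤ K ℂˣ (ψ.comp (powMonoidHom d)) (∏ a ∈ A, (Lambda a - 1)) = 0 ↔
      ∃ a ∈ A, a ∣ d := by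
  rw [lift_prod_Lambda_sub_one_eq_zero_iff _ hA]
  refine exists_congr fun a => and_congr_right fun ha => ?_
  have : NeZero a := ⟨(hA a ha).pos.ne'⟩
  exact rootsOfUnity_le_ker_comp_powMonoidHom_iff hψ (hAN a ha)

end Character

/-- Let `A` and `B` be finite sets of odd integers `≥ 3` such that within each set no
element divides a different element of the same set. If
`∏_{a ∈ A} (Λ_a - 1) ≡ ∏_{b ∈ B} (Λ_b - 1) (mod 2)` in `ℤ[ℂˣ]`, then `A = B`. -/
theorem odd_exponent_sets_eq (A B : Finset ℕ)
    (hA3 : ∀ a ∈ A, 3 ≤ a ∧ Odd a) (hB3 : ∀ b ∈ B, 3 ≤ b ∧ Odd b)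
    (hA : ∀ a ∈ A, ∀ a' ∈ A, a ≠ a' → ¬ a ∣ a')
    (hB : ∀ b ∈ B, ∀ b' ∈ B, b ≠ b' → ¬ b ∣ b')
    (h : Mod2 (∏ a ∈ A, (Lambda a - 1)) (∏ b ∈ B, (Lambda b - 1))) :
    A = B := by
  have hAodd : ∀ a ∈ A, Odd a := fun a ha => (hA3 a ha).2
  have hBodd : ∀ b ∈ B, Odd b := fun b hb => (hB3 b hb).2
  let N := ∏ c ∈ A ∪ B, c
  have hN : Odd N := Finset.prod_induction _ Odd (fun _ _ => Odd.mul) odd_one fun c hc =>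
    (Finset.mem_union.1 hc).elim (hAodd c) (hBodd c)
  have : NeZero N := ⟨hN.pos.ne'⟩
  have : NeZero (Nat.card (rootsOfUnity N ℂ) : AlgebraicClosure (ZMod 2)) := ⟨by
    rw [Complex.card_rootsOfUnity, natCast_eq_one_of_odd_of_two_eq_zero hN CharTwo.two_eq_zero]
    exact one_ne_zero⟩
  obtain ⟨ψ, hψ⟩ := IsAlgClosed.exists_monoidHom_injOn_of_isCyclic
    (K := AlgebraicClosure (ZMod 2)) (rootsOfUnity N ℂ)
  refine Finset.eq_of_isAntichain_of_exists_dvd_iff hA hB fun d => ?_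
  rw [← lift_comp_powMonoidHom_prod_Lambda_sub_one_eq_zero_iff hψ hAodd
      (fun a ha => Finset.dvd_prod_of_mem _ (Finset.mem_union_left _ ha)),
    h.map_eq, lift_comp_powMonoidHom_prod_Lambda_sub_one_eq_zero_iff hψ hBodd
      (fun b hb => Finset.dvd_prod_of_mem _ (Finset.mem_union_right _ hb))]
end
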